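/- Let z be a standard Gaussian random variable and a, b real numbers. For all y with 0 < y < 1/(2·a⁺), where a⁺ = max(a, 0), one has log E[exp(y·(a·z² + b·z - a))] ≤ (a² + b²/2)·y² / (1 - 2·a⁺·y). -/

import Mathlib

/-!
Completing the square in the Gaussian integral gives the closed form
`log E = (b y)² / (2 (1 - 2 a y)) - a y - log (1 - 2 a y) / 2`.
Since `1 - 2 a y ≥ 1 - 2 a⁺ y`, the `b`-term is bounded directly. With `u = 2 a y`, the rest is
`(-log (1 - u) - u) / 2`, which is at most `u² / (4 (1 - u))` for `0 ≤ u < 1`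
(from `log t ≤ sinh (log t)` at `t = (1 - u)⁻¹`) and at most `u² / 4` for `u ≤ 0`
(from `2 w / (w + 2) ≤ log (1 + w)`); and `u² / 4 = a² y²`.
-/

open MeasureTheory ProbabilityTheory Real

lemma integral_exp_neg_mul_sq_add_mul {p : ℝ} (hp : 0 < p) (q : ℝ) :
    ∫ x, exp (-p * x ^ 2 + q * x) = √(π / p) * exp (q ^ 2 / (4 * p)) := by
  have hsq (x : ℝ) : exp (-p * x ^ 2 + q * x) =
      exp (-p * (x - q / (2 * p)) ^ 2) * exp (q ^ 2 / (4 * p)) := by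
    rw [← exp_add]
    congr 1
    field_simp
    ring
  simp_rw [hsq, integral_mul_const, integral_sub_right_eq_self (fun x ↦ exp (-p * x ^ 2)),
    integral_gaussian]

lemma integral_exp_quadratic_gaussianReal {a : ℝ} (ha : 2 * a < 1) (b : ℝ) :
    ∫ z, exp (a * z ^ 2 + b * z) ∂gaussianReal 0 1 =
      exp (b ^ 2 / 2 / (1 - 2 * a)) / √(1 - 2 * a) := by
  have hp : 0 < (1 - 2 * a) / 2 := by linarith
  have hdens (z : ℝ) : gaussianPDFReal 0 1 z • exp (a * z ^ 2 + b * z) =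
      (√(2 * π))⁻¹ * exp (-((1 - 2 * a) / 2) * z ^ 2 + b * z) := by
    rw [gaussianPDFReal, smul_eq_mul, mul_assoc, ← exp_add, NNReal.coe_one, mul_one]
    congr 2
    ring
  simp_rw [integral_gaussianReal_eq_integral_smul one_ne_zero, hdens, integral_const_mul,
    integral_exp_neg_mul_sq_add_mul hp]
  have hroot : (√(2 * π))⁻¹ * √(π / ((1 - 2 * a) / 2)) = (√(1 - 2 * a))⁻¹ := by
    rw [← sqrt_inv, ← sqrt_inv, ← sqrt_mul (by positivity)]
    congr 1
    field_simp [pi_ne_zero]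
  rw [← mul_assoc, hroot, inv_mul_eq_div, div_div]
  congr 3
  ring

lemma log_integral_exp_quadratic_gaussianReal {a : ℝ} (ha : 2 * a < 1) (b c : ℝ) :
    log (∫ z, exp (a * z ^ 2 + b * z + c) ∂gaussianReal 0 1) =
      c + b ^ 2 / 2 / (1 - 2 * a) - log (1 - 2 * a) / 2 := by
  have hsqrt : 0 < √(1 - 2 * a) := sqrt_pos.2 (by linarith)
  simp_rw [exp_add _ c, integral_mul_const, integral_exp_quadratic_gaussianReal ha]
  rw [log_mul (div_pos (exp_pos _) hsqrt).ne' (exp_ne_zero c), log_div (exp_ne_zero _) hsqrt.ne',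
    log_exp, log_exp, log_sqrt (by linarith)]
  ring

lemma log_le_sub_inv_div_two {t : ℝ} (ht : 1 ≤ t) : log t ≤ (t - t⁻¹) / 2 := by
  rw [← sinh_log (by linarith)]
  exact self_le_sinh_iff.2 (log_nonneg ht)

lemma neg_log_one_sub_sub_le_of_nonpos {u : ℝ} (hu : u ≤ 0) :
    -log (1 - u) - u ≤ u ^ 2 / 2 := by
  have hlog := le_log_one_add_of_nonneg (neg_nonneg.2 hu)
  rw [← sub_eq_add_neg] at hlog
  have hpoly : -u - u ^ 2 / 2 ≤ 2 * -u / (-u + 2) := by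
    rw [le_div_iff₀ (by linarith)]
    nlinarith [pow_two_nonneg u]
  linarith

lemma neg_log_one_sub_sub_le_of_nonneg {u : ℝ} (hu0 : 0 ≤ u) (hu1 : u < 1) :
    -log (1 - u) - u ≤ u ^ 2 / (2 * (1 - u)) := by
  have hlog := log_le_sub_inv_div_two (one_le_inv₀ (by linarith) |>.2 (by linarith : 1 - u ≤ 1))
  rw [log_inv, inv_inv] at hlog
  have hsimp : ((1 - u)⁻¹ - (1 - u)) / 2 - u = u ^ 2 / (2 * (1 - u)) := by
    field_simp [(by linarith : 1 - u ≠ 0)]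
    ring
  linarith

lemma neg_log_one_sub_sub_le {u : ℝ} (hu : u < 1) :
    -log (1 - u) - u ≤ u ^ 2 / (2 * (1 - max u 0)) := by
  rcases le_total u 0 with hu0 | hu0
  · simpa [max_eq_right hu0] using neg_log_one_sub_sub_le_of_nonpos hu0
  · simpa [max_eq_left hu0] using neg_log_one_sub_sub_le_of_nonneg hu0 hu

theorem stmt_3 (a b y : ℝ) (hy0 : 0 < y) (hy1 : 2 * max a 0 * y < 1) :
    Real.log (∫ z, Real.exp (y * (a * z ^ 2 + b * z - a)) ∂(gaussianReal 0 1)) ≤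
      (a ^ 2 + b ^ 2 / 2) * y ^ 2 / (1 - 2 * max a 0 * y) := by
  have hmax : max (2 * (a * y)) 0 = 2 * max a 0 * y := by
    rw [mul_max_of_nonneg _ _ zero_le_two, max_mul_of_nonneg _ _ hy0.le, mul_assoc, mul_zero,
      zero_mul]
  have hs : 0 < 1 - 2 * max a 0 * y := by linarith
  have hs_le : 1 - 2 * max a 0 * y ≤ 1 - 2 * (a * y) := by
    linarith [hmax ▸ le_max_left (2 * (a * y)) 0]
  have hquad (z : ℝ) : y * (a * z ^ 2 + b * z - a) = a * y * z ^ 2 + b * y * z + -(a * y) := by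
    ring
  simp_rw [hquad]
  rw [log_integral_exp_quadratic_gaussianReal (by linarith)]
  have hb : (b * y) ^ 2 / 2 / (1 - 2 * (a * y)) ≤ (b * y) ^ 2 / 2 / (1 - 2 * max a 0 * y) :=
    div_le_div_of_nonneg_left (by positivity) hs hs_le
  have hlog := hmax ▸ neg_log_one_sub_sub_le (u := 2 * (a * y)) (by linarith)
  have hsum : (a ^ 2 + b ^ 2 / 2) * y ^ 2 / (1 - 2 * max a 0 * y) =
      (b * y) ^ 2 / 2 / (1 - 2 * max a 0 * y) +
        (2 * (a * y)) ^ 2 / (2 * (1 - 2 * max a 0 * y)) / 2 := by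
    field_simp
    ring
  linarith
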